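/- arXiv:2209.01375 — 2 statements merged into one kernel-verified Lean document; each statement's English description precedes it below -/
import Mathlib

section
/- The function t ↦ ln Γ(1 + 1/t) defined on (0, +∞) is μ-weakly convex for any μ > 2·γ_E·(t₀ − 1)³, where γ_E is the Euler–Mascheroni constant and t₀ > 1 is the unique positive zero of the digamma function; i.e., t ↦ ln Γ(1 + 1/t) + (μ/2)t² is convex on (0, +∞). -/
/-!
Write `ψ = Dig` and `γ = γ_E`. The derivative of `t ↦ ln Γ(1 + 1/t) + (μ/2)t²` is
`D(t) = -ψ(1 + 1/t)/t² + μt`, so it suffices that `D` is monotone. Since `ln Γ` is convex, `ψ` is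
nondecreasing, and with `c = t₀ - 1`:
* on `(0, 1/c]` we have `ψ(1 + 1/t) ≥ ψ(t₀) = 0`, and `ψ(1 + 1/t)/t²` is a product of nonnegative
  nonincreasing functions of `t`;
* on `[1/c, ∞)` we have `-ψ(1 + 1/t) ≤ -ψ(1) = γ`, and `1/t²` is `2c³`-Lipschitz there, which the
  term `μt` absorbs.
-/

/-- The digamma function `Dig = Γ'/Γ`. -/
noncomputable def Dig (x : ℝ) : ℝ := deriv Real.Gamma x / Real.Gamma x

open Real Set

lemma hasDerivAt_log_Gamma {x : ℝ} (hx : 0 < x) :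
    HasDerivAt (fun y => log (Gamma y)) (Dig x) x := by
  have hΓ : HasDerivAt Gamma (deriv Gamma x) x :=
    (differentiableAt_Gamma fun m => by linarith [m.cast_nonneg (α := ℝ)]).hasDerivAt
  simpa [Dig, div_eq_inv_mul] using hΓ.log (Gamma_pos_of_pos hx).ne'

lemma Dig_monotoneOn : MonotoneOn Dig (Ioi 0) := by
  have h := convexOn_log_Gamma.monotoneOn_deriv fun x hx =>
    (hasDerivAt_log_Gamma (mem_Ioi.1 hx)).differentiableAt
  intro a ha b hb hab
  simpa only [Function.comp_def, (hasDerivAt_log_Gamma (mem_Ioi.1 ha)).deriv,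
    (hasDerivAt_log_Gamma (mem_Ioi.1 hb)).deriv] using h ha hb hab

lemma Dig_one : Dig 1 = -eulerMascheroniConstant := by
  rw [Dig, hasDerivAt_Gamma_one.deriv, Gamma_one, div_one]

lemma eulerMascheroniConstant_pos : 0 < eulerMascheroniConstant :=
  one_half_pos.trans one_half_lt_eulerMascheroniConstant

lemma neg_eulerMascheroniConstant_le_Dig {x : ℝ} (hx : 1 ≤ x) :
    -eulerMascheroniConstant ≤ Dig x :=
  Dig_one ▸ Dig_monotoneOn (mem_Ioi.2 one_pos) (mem_Ioi.2 (one_pos.trans_le hx)) hx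

lemma Dig_one_add_one_div_antitoneOn : AntitoneOn (fun t => Dig (1 + 1 / t)) (Ioi 0) := by
  rintro t₁ (ht₁ : 0 < t₁) t₂ (ht₂ : 0 < t₂) h₁₂
  refine Dig_monotoneOn (mem_Ioi.2 (by positivity)) (mem_Ioi.2 (by positivity)) ?_
  gcongr

lemma hasDerivAt_log_Gamma_one_add_one_div {t : ℝ} (ht : 0 < t) :
    HasDerivAt (fun t => log (Gamma (1 + 1 / t))) (-Dig (1 + 1 / t) / t ^ 2) t := by
  have hinv : HasDerivAt (fun t : ℝ => 1 + 1 / t) (-(t ^ 2)⁻¹) t := by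
    simpa [one_div] using (hasDerivAt_inv ht.ne').const_add 1
  refine ((hasDerivAt_log_Gamma (x := 1 + 1 / t) (by positivity)).comp t hinv).congr_deriv ?_
  ring

lemma one_div_sq_sub_one_div_sq_le {c t₁ t₂ : ℝ} (hc : 0 < c) (ht₁ : c⁻¹ ≤ t₁)
    (h₁₂ : t₁ ≤ t₂) : 1 / t₁ ^ 2 - 1 / t₂ ^ 2 ≤ 2 * c ^ 3 * (t₂ - t₁) := by
  have ht₁0 : 0 < t₁ := (inv_pos.2 hc).trans_le ht₁
  have ht₂0 : 0 < t₂ := ht₁0.trans_le h₁₂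
  have hct₁ : 1 ≤ c * t₁ := by rwa [inv_le_iff_one_le_mul₀' hc] at ht₁
  have hct₂ : 1 ≤ c * t₂ := hct₁.trans (by gcongr)
  rw [div_sub_div _ _ (by positivity) (by positivity), div_le_iff₀ (by positivity)]
  have h₁ : t₁ ≤ c ^ 3 * t₁ ^ 2 * t₂ ^ 2 := by
    have : 1 ≤ (c * t₁) * (c * t₂) ^ 2 := one_le_mul_of_one_le_of_one_le hct₁ (one_le_pow₀ hct₂)
    linarith [mul_le_mul_of_nonneg_left this ht₁0.le]
  have h₂ : t₂ ≤ c ^ 3 * t₁ ^ 2 * t₂ ^ 2 := by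
    have : 1 ≤ (c * t₂) * (c * t₁) ^ 2 := one_le_mul_of_one_le_of_one_le hct₂ (one_le_pow₀ hct₁)
    linarith [mul_le_mul_of_nonneg_left this ht₂0.le]
  linarith [mul_le_mul_of_nonneg_left (add_le_add h₁ h₂) (sub_nonneg.2 h₁₂)]

lemma monotoneOn_Ioc_neg_Dig_div_sq_add_mul {c μ : ℝ} (hc : 0 < c) (hψ : 0 ≤ Dig (1 + c))
    (hμ : 0 ≤ μ) :
    MonotoneOn (fun t => -Dig (1 + 1 / t) / t ^ 2 + μ * t) (Ioc 0 c⁻¹) := by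
  rintro t₁ ⟨ht₁, -⟩ t₂ ⟨ht₂, ht₂c⟩ h₁₂
  have hψ₂ : 0 ≤ Dig (1 + 1 / t₂) := by
    have h : Dig (1 + 1 / c⁻¹) ≤ Dig (1 + 1 / t₂) :=
      Dig_one_add_one_div_antitoneOn ht₂ (inv_pos.2 hc) ht₂c
    rw [one_div, inv_inv] at h
    exact hψ.trans h
  have hψ₁₂ : Dig (1 + 1 / t₂) ≤ Dig (1 + 1 / t₁) := Dig_one_add_one_div_antitoneOn ht₁ ht₂ h₁₂
  have : Dig (1 + 1 / t₂) / t₂ ^ 2 ≤ Dig (1 + 1 / t₁) / t₁ ^ 2 :=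
    div_le_div₀ (hψ₂.trans hψ₁₂) hψ₁₂ (by positivity) (by gcongr)
  have : μ * t₁ ≤ μ * t₂ := mul_le_mul_of_nonneg_left h₁₂ hμ
  simp only [neg_div]
  linarith

lemma monotoneOn_Ici_neg_Dig_div_sq_add_mul {c μ : ℝ} (hc : 0 < c)
    (hμ : 2 * eulerMascheroniConstant * c ^ 3 ≤ μ) :
    MonotoneOn (fun t => -Dig (1 + 1 / t) / t ^ 2 + μ * t) (Ici c⁻¹) := by
  intro t₁ ht₁ t₂ ht₂ h₁₂
  have ht₁0 : 0 < t₁ := (inv_pos.2 hc).trans_le ht₁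
  have ht₂0 : 0 < t₂ := ht₁0.trans_le h₁₂
  have hγ := eulerMascheroniConstant_pos.le
  set ψ₁ := Dig (1 + 1 / t₁)
  set ψ₂ := Dig (1 + 1 / t₂)
  have hψ₁ : -eulerMascheroniConstant ≤ ψ₁ :=
    neg_eulerMascheroniConstant_le_Dig (le_add_of_nonneg_right (by positivity))
  have hψ₁₂ : ψ₂ ≤ ψ₁ := Dig_one_add_one_div_antitoneOn ht₁0 ht₂0 h₁₂
  have hsq : 0 ≤ 1 / t₁ ^ 2 - 1 / t₂ ^ 2 := sub_nonneg.2 (by gcongr)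
  have hlip := one_div_sq_sub_one_div_sq_le hc ht₁ h₁₂
  calc -ψ₁ / t₁ ^ 2 + μ * t₁
      = -ψ₁ * (1 / t₁ ^ 2 - 1 / t₂ ^ 2) - ψ₁ / t₂ ^ 2 + μ * t₁ := by ring
    _ ≤ eulerMascheroniConstant * (2 * c ^ 3 * (t₂ - t₁)) - ψ₂ / t₂ ^ 2 + μ * t₁ := by
        gcongr
        linarith
    _ ≤ -ψ₂ / t₂ ^ 2 + μ * t₂ := by
        have := mul_le_mul_of_nonneg_right hμ (sub_nonneg.2 h₁₂)
        rw [neg_div]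
        linarith

lemma MonotoneOn.convexOn_of_hasDerivAt {s : Set ℝ} (hs : Convex ℝ s) (hso : IsOpen s)
    {f f' : ℝ → ℝ} (hf : ∀ x ∈ s, HasDerivAt f (f' x) x) (hf' : MonotoneOn f' s) :
    ConvexOn ℝ s f := by
  refine MonotoneOn.convexOn_of_deriv hs (fun x hx => (hf x hx).continuousAt.continuousWithinAt)
    (fun x hx => ?_) ?_ <;> rw [hso.interior_eq] at *
  · exact (hf x hx).differentiableAt.differentiableWithinAt
  · exact hf'.congr fun x hx => ((hf x hx).deriv).symm

theorem stmt0_general (t₀ : ℝ) (ht₀ : 1 < t₀) (hzero : Dig t₀ = 0)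
    (μ : ℝ) (hμ : 2 * Real.eulerMascheroniConstant * (t₀ - 1) ^ 3 < μ) :
    ConvexOn ℝ (Set.Ioi (0 : ℝ))
      (fun t => Real.log (Real.Gamma (1 + 1 / t)) + μ / 2 * t ^ 2) := by
  have hc : 0 < t₀ - 1 := sub_pos.2 ht₀
  have hμ₀ : 0 ≤ μ := le_trans (by have := eulerMascheroniConstant_pos; positivity) hμ.le
  have hD : MonotoneOn (fun t => -Dig (1 + 1 / t) / t ^ 2 + μ * t) (Ioi 0) := by
    have hψ : 0 ≤ Dig (1 + (t₀ - 1)) := by rw [add_sub_cancel, hzero]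
    rw [← Ioc_union_Ici_eq_Ioi (inv_pos.2 hc)]
    exact (monotoneOn_Ioc_neg_Dig_div_sq_add_mul hc hψ hμ₀).union_right
      (monotoneOn_Ici_neg_Dig_div_sq_add_mul hc hμ.le) (isGreatest_Ioc (inv_pos.2 hc)) isLeast_Ici
  refine hD.convexOn_of_hasDerivAt (convex_Ioi 0) isOpen_Ioi fun t ht => ?_
  refine ((hasDerivAt_log_Gamma_one_add_one_div ht).add
    ((hasDerivAt_pow 2 t).const_mul (μ / 2))).congr_deriv ?_
  ring

/-- The function `t ↦ ln Γ(1 + 1/t)` on `(0, +∞)` is `μ`-weakly convex for any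
`μ > 2·γ_E·(t₀ − 1)³`, where `t₀ > 1` is the unique positive zero of the digamma
function: i.e. `t ↦ ln Γ(1 + 1/t) + (μ/2)t²` is convex on `(0, +∞)`. -/
theorem stmt0 (t₀ : ℝ) (ht₀ : 1 < t₀) (hzero : Dig t₀ = 0)
    (huniq : ∀ s : ℝ, 0 < s → Dig s = 0 → s = t₀)
    (μ : ℝ) (hμ : 2 * Real.eulerMascheroniConstant * (t₀ - 1) ^ 3 < μ) :
    ConvexOn ℝ (Set.Ioi (0 : ℝ))
      (fun t => Real.log (Real.Gamma (1 + 1 / t)) + μ / 2 * t ^ 2) :=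
  stmt0_general t₀ ht₀ hzero μ hμ
end

section
/- Let q: ℝᴺ → ℝ with ∇q L_q-Lipschitz on a bounded set S containing all iterates, f: ℝⁿ⁰ → ℝ with L_f-Lipschitz gradient, and suppose at iteration ℓ there exists τ₀ > 0 with ‖∇f(ζ₀^ℓ) + ∇₀q(ζ^{ℓ+1,1})‖ ≤ τ₀‖ζ₀^{ℓ+1} − ζ₀^ℓ‖. Then the vector s₀^{ℓ+1} = ∇f(ζ₀^{ℓ+1}) + ∇₀q(ζ^{ℓ+1}) satisfies ‖s₀^{ℓ+1}‖ ≤ (L_f + τ₀ + L_q)·‖ζ^{ℓ+1} − ζ^ℓ‖. -/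
/-! The gap between `s₀^{ℓ+1}` and the vector controlled by inexact optimality splits into a
change of `∇f` along block 0 and a change of `∇₀q` between `ζ^{ℓ+1,1}` and `ζ^{ℓ+1}`; each is
bounded by a Lipschitz constant times a displacement that is at most `‖ζ^{ℓ+1} − ζ^ℓ‖` in the
max-norm of the product. -/

section

variable {E F G : Type*} [SeminormedAddCommGroup E] [SeminormedAddCommGroup F]
  [SeminormedAddCommGroup G]

lemma norm_add_le_norm_sub_add_norm_add_add_norm_sub (a a' b b' : G) :
    ‖a' + b'‖ ≤ ‖a' - a‖ + ‖a + b‖ + ‖b' - b‖ :=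
  calc ‖a' + b'‖ = ‖(a' - a) + (a + b) + (b' - b)‖ := by congr 1; abel
    _ ≤ ‖a' - a‖ + ‖a + b‖ + ‖b' - b‖ := norm_add₃_le

lemma Prod.norm_mk_sub_mk_left_le (x x' : E) (y y' : F) :
    ‖((x', y') : E × F) - (x', y)‖ ≤ ‖((x', y') : E × F) - (x, y)‖ := by
  simp only [Prod.mk_sub_mk, sub_self, Prod.norm_mk, norm_zero]
  exact max_le (le_max_of_le_left (norm_nonneg _)) (le_max_right _ _)

theorem norm_add_le_of_inexact_block_step (gf : E → G) (g0 : E × F → G)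
    {Lf Lq τ : ℝ} (hLf : 0 ≤ Lf) (hLq : 0 ≤ Lq) (hτ : 0 ≤ τ) {x x' : E} {y y' : F}
    (hf : ‖gf x' - gf x‖ ≤ Lf * ‖x' - x‖)
    (hq : ‖g0 (x', y') - g0 (x', y)‖ ≤ Lq * ‖((x', y') : E × F) - (x', y)‖)
    (hinex : ‖gf x + g0 (x', y)‖ ≤ τ * ‖x' - x‖) :
    ‖gf x' + g0 (x', y')‖ ≤ (Lf + τ + Lq) * ‖((x', y') : E × F) - (x, y)‖ := by
  have hx : ‖x' - x‖ ≤ ‖((x', y') : E × F) - (x, y)‖ :=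
    norm_fst_le (((x', y') : E × F) - (x, y))
  have hy := Prod.norm_mk_sub_mk_left_le x x' y y'
  calc ‖gf x' + g0 (x', y')‖
      ≤ ‖gf x' - gf x‖ + ‖gf x + g0 (x', y)‖ + ‖g0 (x', y') - g0 (x', y)‖ :=
        norm_add_le_norm_sub_add_norm_add_add_norm_sub _ _ _ _
    _ ≤ Lf * ‖x' - x‖ + τ * ‖x' - x‖ + Lq * ‖((x', y') : E × F) - (x', y)‖ := by gcongr
    _ ≤ (Lf + τ + Lq) * ‖((x', y') : E × F) - (x, y)‖ := by
        rw [add_mul, add_mul]; gcongr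

end

theorem stmt14_general {n₀ n₁ : ℕ}
    (gf : EuclideanSpace ℝ (Fin n₀) → EuclideanSpace ℝ (Fin n₀))
    (g0 : EuclideanSpace ℝ (Fin n₀) × EuclideanSpace ℝ (Fin n₁) → EuclideanSpace ℝ (Fin n₀))
    (g1 : EuclideanSpace ℝ (Fin n₀) × EuclideanSpace ℝ (Fin n₁) → EuclideanSpace ℝ (Fin n₁))
    (S : Set (EuclideanSpace ℝ (Fin n₀) × EuclideanSpace ℝ (Fin n₁)))
    (Lf Lq τ₀ : ℝ) (hLf : 0 ≤ Lf) (hLq : 0 ≤ Lq) (hτ₀ : 0 < τ₀)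
    -- `gf` is the gradient of `f`, `L_f`-Lipschitz
    (hgfLip : LipschitzWith (Real.toNNReal Lf) gf)
    -- `(g0, g1)` is the (blockwise) gradient of `q` on `S`, `L_q`-Lipschitz on `S`
    (hgqLip : ∀ z ∈ S, ∀ w ∈ S,
      ‖((g0 z - g0 w, g1 z - g1 w) :
          EuclideanSpace ℝ (Fin n₀) × EuclideanSpace ℝ (Fin n₁))‖ ≤ Lq * ‖z - w‖)
    -- the iterates: `x = ζ₀^ℓ`, `x' = ζ₀^{ℓ+1}`, `yold`/`ynew` the remaining blocks
    (x x' : EuclideanSpace ℝ (Fin n₀)) (yold ynew : EuclideanSpace ℝ (Fin n₁))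
    (hmem2 : (x', yold) ∈ S) (hmem3 : (x', ynew) ∈ S)
    -- inexact optimality at iteration ℓ
    (hinex : ‖gf x + g0 (x', yold)‖ ≤ τ₀ * ‖x' - x‖) :
    ‖gf x' + g0 (x', ynew)‖ ≤
      (Lf + τ₀ + Lq) *
        ‖((x', ynew) : EuclideanSpace ℝ (Fin n₀) × EuclideanSpace ℝ (Fin n₁)) - (x, yold)‖ := by
  have hf : ‖gf x' - gf x‖ ≤ Lf * ‖x' - x‖ := by
    simpa only [Real.coe_toNNReal _ hLf] using hgfLip.norm_sub_le x' x
  have hq := (norm_fst_le _).trans (hgqLip _ hmem3 _ hmem2)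
  exact norm_add_le_of_inexact_block_step gf g0 hLf hLq hτ₀.le hf hq hinex

/-- Inexact-optimality bound for the first block: if `∇q` is `L_q`-Lipschitz on a bounded
set `S` containing all iterates, `∇f` is `L_f`-Lipschitz, and at iteration `ℓ` one has
`‖∇f(ζ₀^ℓ) + ∇₀q(ζ^{ℓ+1,1})‖ ≤ τ₀‖ζ₀^{ℓ+1} − ζ₀^ℓ‖`, then
`s₀^{ℓ+1} = ∇f(ζ₀^{ℓ+1}) + ∇₀q(ζ^{ℓ+1})` satisfies
`‖s₀^{ℓ+1}‖ ≤ (L_f + τ₀ + L_q)·‖ζ^{ℓ+1} − ζ^ℓ‖`. Here the full space is the product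
of the first block space and the space of the remaining blocks. -/
theorem stmt14 {n₀ n₁ : ℕ}
    (q : EuclideanSpace ℝ (Fin n₀) × EuclideanSpace ℝ (Fin n₁) → ℝ)
    (f : EuclideanSpace ℝ (Fin n₀) → ℝ)
    (gf : EuclideanSpace ℝ (Fin n₀) → EuclideanSpace ℝ (Fin n₀))
    (g0 : EuclideanSpace ℝ (Fin n₀) × EuclideanSpace ℝ (Fin n₁) → EuclideanSpace ℝ (Fin n₀))
    (g1 : EuclideanSpace ℝ (Fin n₀) × EuclideanSpace ℝ (Fin n₁) → EuclideanSpace ℝ (Fin n₁))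
    (S : Set (EuclideanSpace ℝ (Fin n₀) × EuclideanSpace ℝ (Fin n₁)))
    (hSbdd : Bornology.IsBounded S)
    (Lf Lq τ₀ : ℝ) (hLf : 0 ≤ Lf) (hLq : 0 ≤ Lq) (hτ₀ : 0 < τ₀)
    -- `gf` is the gradient of `f`, `L_f`-Lipschitz
    (hgf : ∀ x, HasGradientAt f (gf x) x)
    (hgfLip : LipschitzWith (Real.toNNReal Lf) gf)
    -- `(g0, g1)` is the (blockwise) gradient of `q` on `S`, `L_q`-Lipschitz on `S`
    (hg0 : ∀ z ∈ S, HasGradientAt (fun x => q (x, z.2)) (g0 z) z.1)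
    (hg1 : ∀ z ∈ S, HasGradientAt (fun y => q (z.1, y)) (g1 z) z.2)
    (hgqLip : ∀ z ∈ S, ∀ w ∈ S,
      ‖((g0 z - g0 w, g1 z - g1 w) :
          EuclideanSpace ℝ (Fin n₀) × EuclideanSpace ℝ (Fin n₁))‖ ≤ Lq * ‖z - w‖)
    -- the iterates: `x = ζ₀^ℓ`, `x' = ζ₀^{ℓ+1}`, `yold`/`ynew` the remaining blocks
    (x x' : EuclideanSpace ℝ (Fin n₀)) (yold ynew : EuclideanSpace ℝ (Fin n₁))
    (hmem1 : (x, yold) ∈ S) (hmem2 : (x', yold) ∈ S) (hmem3 : (x', ynew) ∈ S)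
    -- inexact optimality at iteration ℓ
    (hinex : ‖gf x + g0 (x', yold)‖ ≤ τ₀ * ‖x' - x‖) :
    ‖gf x' + g0 (x', ynew)‖ ≤
      (Lf + τ₀ + Lq) *
        ‖((x', ynew) : EuclideanSpace ℝ (Fin n₀) × EuclideanSpace ℝ (Fin n₁)) - (x, yold)‖ :=
  stmt14_general gf g0 g1 S Lf Lq τ₀ hLf hLq hτ₀ hgfLip hgqLip x x' yold ynew hmem2 hmem3 hinex
end
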